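/- arXiv:2410.19294 — 2 statements merged into one kernel-verified Lean document; each statement's English description precedes it below -/
import Mathlib

section
/- Let K be a positive integer, let p(· | y) for y ∈ {1, …, K} be probability density functions on ℝ^d, and let β ∈ ℝ^K be a probability vector with strictly positive entries such that Σ_j β_j p(x | j) > 0 for almost every x. Define the Bayes posterior P(y | x) = β_y p(x | y) / Σ_{j=1}^K β_j p(x | j), and suppose f ∈ ℝ^K satisfies softmax(f)_y = P(y | x); if instead one defines, for each class y and uniform downstream prior, the downstream posterior P_ds(y | x) = p(x | y) / Σ_{j=1}^K p(x | j), then argmax_y P_ds(y | x) = argmax_y (f_y − ln β_y). That is, subtracting the log pre-training prior from the logits yields the Bayes-optimal prediction rule for the class-balanced downstream distribution. -/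
open MeasureTheory

/-- `softmax v y = exp (v y) / ∑ j, exp (v j)`. -/
noncomputable def softmax {K : ℕ} (v : Fin K → ℝ) (y : Fin K) : ℝ :=
  Real.exp (v y) / ∑ j, Real.exp (v j)

/-!
Bayes' rule gives `β_y p(x|y) ∝ exp f_y`, i.e. `p(x|y) ∝ exp (f_y - log β_y)` with a nonzero factor
independent of `y`. Normalising over `y`, the downstream posterior is exactly
`softmax (f - log β)`, and softmax preserves the order of the logits.
-/

open Real Finset

theorem softmax_le_softmax_iff {K : ℕ} (v : Fin K → ℝ) (y y' : Fin K) :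
    softmax v y' ≤ softmax v y ↔ v y' ≤ v y := by
  have hsum : 0 < ∑ j, exp (v j) := sum_pos (fun j _ => exp_pos (v j)) ⟨y, mem_univ y⟩
  rw [softmax, softmax, div_le_div_iff_of_pos_right hsum, exp_le_exp]

theorem div_sum_eq_softmax_of_eq_mul_exp {K : ℕ} {q v : Fin K → ℝ} {c : ℝ} (hc : c ≠ 0)
    (hq : ∀ z, q z = c * exp (v z)) (z : Fin K) :
    q z / ∑ j, q j = softmax v z := by
  simp only [hq, ← mul_sum, softmax, mul_div_mul_left _ _ hc]

theorem eq_mul_exp_sub_log_of_softmax_eq {K : ℕ} {f β a : Fin K → ℝ} {S : ℝ}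
    (hβ : ∀ j, 0 < β j) (hS : S ≠ 0) (hf : ∀ z, softmax f z = β z * a z / S) (z : Fin K) :
    a z = S / (∑ j, exp (f j)) * exp (f z - log (β z)) := by
  have hT : 0 < ∑ j, exp (f j) := sum_pos (fun j _ => exp_pos (f j)) ⟨z, mem_univ z⟩
  have hz := hf z
  rw [softmax, div_eq_div_iff hT.ne' hS] at hz
  rw [exp_sub, exp_log (hβ z)]
  field_simp [(hβ z).ne']
  linarith

theorem debiased_logits_bayes_optimal_general {d K : ℕ}
    (p : Fin K → (Fin d → ℝ) → ℝ)
    (β : Fin K → ℝ) (hβpos : ∀ j, 0 < β j)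
    (x : Fin d → ℝ)
    (hxβ : 0 < ∑ j, β j * p j x)
    (f : Fin K → ℝ)
    (hf : ∀ y, softmax f y = β y * p y x / ∑ j, β j * p j x) :
    ∀ y : Fin K,
      (∀ y' : Fin K,
          p y' x / (∑ j, p j x) ≤ p y x / (∑ j, p j x)) ↔
      (∀ y' : Fin K, f y' - Real.log (β y') ≤ f y - Real.log (β y)) := by
  intro y
  have hT : 0 < ∑ j, exp (f j) := sum_pos (fun j _ => exp_pos (f j)) ⟨y, mem_univ y⟩
  have hposterior : ∀ z, p z x / ∑ j, p j x = softmax (fun j => f j - log (β j)) z :=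
    div_sum_eq_softmax_of_eq_mul_exp (div_pos hxβ hT).ne'
      (eq_mul_exp_sub_log_of_softmax_eq hβpos hxβ.ne' hf)
  simp only [hposterior, softmax_le_softmax_iff]

/-- Subtracting the log pre-training prior from the logits yields the
Bayes-optimal prediction rule for the class-balanced downstream distribution:
if `softmax f` equals the pre-training posterior (prior `β`) at `x`, then the
argmax of the uniform-prior downstream posterior coincides with the argmax of
`f_y − ln β_y`. -/
theorem debiased_logits_bayes_optimal {d K : ℕ} (hK : 0 < K)
    (p : Fin K → (Fin d → ℝ) → ℝ)
    (hp0 : ∀ y x, 0 ≤ p y x)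
    (hp1 : ∀ y, ∫ x : Fin d → ℝ, p y x = 1)
    (β : Fin K → ℝ) (hβpos : ∀ j, 0 < β j) (hβsum : ∑ j, β j = 1)
    (x : Fin d → ℝ)
    (hxβ : 0 < ∑ j, β j * p j x)
    (f : Fin K → ℝ)
    (hf : ∀ y, softmax f y = β y * p y x / ∑ j, β j * p j x) :
    ∀ y : Fin K,
      (∀ y' : Fin K,
          p y' x / (∑ j, p j x) ≤ p y x / (∑ j, p j x)) ↔
      (∀ y' : Fin K, f y' - Real.log (β y') ≤ f y - Real.log (β y)) :=
  debiased_logits_bayes_optimal_general p β hβpos x hxβ f hf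
end

section
/- Let K ≥ 2 and f ∈ ℝ^K. Then the function τ ↦ max_{j ∈ {1,…,K}} softmax(f/τ)_j is antitone (monotonically non-increasing) on (0, ∞). Consequently, for any finite family of logit vectors f(x_1), …, f(x_N) ∈ ℝ^K, the average confidence conf(f, τ) = (1/N) Σ_{i=1}^N max_j softmax(f(x_i)/τ)_j is antitone in τ on (0, ∞). -/
open Finset Set

lemma softmax_eq_inv_sum_exp_sub {K : ℕ} (v : Fin K → ℝ) (y : Fin K) :
    softmax v y = (∑ j, Real.exp (v j - v y))⁻¹ := by
  have hsum : ∑ j, Real.exp (v j) = Real.exp (v y) * ∑ j, Real.exp (v j - v y) := by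
    rw [mul_sum]
    exact sum_congr rfl fun j _ => by rw [← Real.exp_add, add_sub_cancel]
  rw [softmax, hsum, div_mul_eq_div_div, div_self (Real.exp_ne_zero _), one_div]

lemma softmax_le_softmax {K : ℕ} (v : Fin K → ℝ) {i y : Fin K} (h : v i ≤ v y) :
    softmax v i ≤ softmax v y := by
  unfold softmax
  gcongr

lemma iSup_softmax_eq_of_forall_le {K : ℕ} {v : Fin K → ℝ} {m : Fin K}
    (hm : ∀ j, v j ≤ v m) : ⨆ j, softmax v j = softmax v m :=
  have : Nonempty (Fin K) := ⟨m⟩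
  le_antisymm (ciSup_le fun j => softmax_le_softmax v (hm j))
    (le_ciSup (finite_range _).bddAbove m)

lemma antitoneOn_softmax_div_of_forall_le {K : ℕ} {v : Fin K → ℝ} {m : Fin K}
    (hm : ∀ j, v j ≤ v m) :
    AntitoneOn (fun τ : ℝ => softmax (fun i => v i / τ) m) (Ioi 0) := by
  intro a ha b _ hab
  simp only [softmax_eq_inv_sum_exp_sub, ← sub_div]
  have hpos : 0 < ∑ j, Real.exp ((v j - v m) / a) :=
    sum_pos (fun j _ => Real.exp_pos _) ⟨m, mem_univ m⟩
  refine inv_anti₀ hpos (sum_le_sum fun j _ => Real.exp_le_exp.2 ?_)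
  simpa only [neg_div, neg_le_neg_iff] using
    div_le_div_of_nonneg_left (neg_nonneg.2 (sub_nonpos.2 (hm j))) ha hab

theorem antitoneOn_iSup_softmax_div {K : ℕ} (v : Fin K → ℝ) :
    AntitoneOn (fun τ : ℝ => ⨆ j, softmax (fun i => v i / τ) j) (Ioi 0) := by
  rcases isEmpty_or_nonempty (Fin K) with _ | _
  · simpa only [Real.iSup_of_isEmpty] using antitoneOn_const
  obtain ⟨m, hm⟩ := Finite.exists_max v
  refine (antitoneOn_softmax_div_of_forall_le hm).congr fun τ hτ =>
    (iSup_softmax_eq_of_forall_le fun j => ?_).symm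
  exact div_le_div_of_nonneg_right (hm j) (le_of_lt hτ)

theorem confidence_antitone_in_temperature_general {K : ℕ}
    (f : Fin K → ℝ) {N : ℕ} (F : Fin N → Fin K → ℝ) :
    AntitoneOn (fun τ : ℝ => ⨆ j : Fin K, softmax (fun i => f i / τ) j)
      (Set.Ioi 0) ∧
    AntitoneOn (fun τ : ℝ =>
        (1 / N : ℝ) * ∑ i : Fin N, ⨆ j : Fin K, softmax (fun k => F i k / τ) j)
      (Set.Ioi 0) := by
  refine ⟨antitoneOn_iSup_softmax_div f, fun a ha b hb hab => ?_⟩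
  exact mul_le_mul_of_nonneg_left
    (sum_le_sum fun i _ => antitoneOn_iSup_softmax_div (F i) ha hb hab) (by positivity)

/-- The maximal softmax probability `τ ↦ max_j softmax (f/τ)_j` is antitone in
the temperature `τ` on `(0, ∞)`; consequently so is the average confidence
`conf(F, τ) = (1/N) ∑ i, max_j softmax (F i / τ)_j` over any finite family of
logit vectors. -/
theorem confidence_antitone_in_temperature {K : ℕ} (hK : 2 ≤ K)
    (f : Fin K → ℝ) {N : ℕ} (hN : 0 < N) (F : Fin N → Fin K → ℝ) :
    AntitoneOn (fun τ : ℝ => ⨆ j : Fin K, softmax (fun i => f i / τ) j)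
      (Set.Ioi 0) ∧
    AntitoneOn (fun τ : ℝ =>
        (1 / N : ℝ) * ∑ i : Fin N, ⨆ j : Fin K, softmax (fun k => F i k / τ) j)
      (Set.Ioi 0) :=
  confidence_antitone_in_temperature_general f F
end
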